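/- arXiv:1610.04919 — 10 statements merged into one kernel-verified Lean document; each statement's English description precedes it below -/
import Mathlib

section
/- Let Y be a finite nonempty subset of ℝ and let f : ℝ × Y → ℝ be submodular, i.e. for all x⁻ ≤ x⁺ in ℝ and all y⁻ ≤ y⁺ in Y, f(x⁺, y⁺) + f(x⁻, y⁻) ≤ f(x⁺, y⁻) + f(x⁻, y⁺). Define g(x) to be the least element of the set of minimizers of y ↦ f(x, y) over Y. Then g : ℝ → Y is nondecreasing. -/
/-- Topkis-type theorem: if `f : ℝ × Y → ℝ` is submodular (for a finite nonempty
`Y ⊆ ℝ`), then the map sending `x` to the least element of the set of minimizers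
of `y ↦ f x y` over `Y` is nondecreasing. -/
theorem topkis_least_argmin_monotone
    (Y : Finset ℝ) (hY : Y.Nonempty) (f : ℝ → ℝ → ℝ)
    (hsub : ∀ xm xp : ℝ, xm ≤ xp → ∀ ym ∈ Y, ∀ yp ∈ Y, ym ≤ yp →
      f xp yp + f xm ym ≤ f xp ym + f xm yp)
    (g : ℝ → ℝ)
    (hg : ∀ x : ℝ, IsLeast {y | y ∈ Y ∧ ∀ z ∈ Y, f x y ≤ f x z} (g x)) :
    Monotone g := by
  intro x x' hxx'
  by_contra hlt
  push_neg at hlt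
  obtain ⟨⟨haY, hamin⟩, halb⟩ := hg x
  obtain ⟨⟨hbY, hbmin⟩, _⟩ := hg x'
  set a := g x
  set b := g x'
  have hba : b ≤ a := hlt.le
  have hkey := hsub x x' hxx' b hbY a haY hba
  -- f x' a + f x b ≤ f x' b + f x a
  have h1 : f x a ≤ f x b := hamin b hbY
  have h2 : f x' b ≤ f x' a := hbmin a haY
  have h3 : f x b ≤ f x a := by linarith
  have : a ≤ b := halb ⟨hbY, fun z hz => h3.trans (hamin z hz)⟩
  linarith
end

section
/- Let 𝒫 ⊆ ℝ be finite and nonempty, let Cp : ℝ → ℝ be arbitrary, and let s : ℝ → ℝ be nondecreasing on 𝒫. Define g(x) to be the least element of the set of minimizers over p ∈ 𝒫 of Cp(p) − s(p)·x. Then g : ℝ → 𝒫 is nondecreasing. -/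
/-- If `s` is nondecreasing on the finite nonempty set `𝒫`, then the map sending
`x` to the least element of the set of minimizers over `p ∈ 𝒫` of
`Cp p - s p * x` is nondecreasing. -/
theorem least_argmin_monotone_in_x
    (P : Finset ℝ) (hP : P.Nonempty) (Cp : ℝ → ℝ) (s : ℝ → ℝ)
    (hs : ∀ p ∈ P, ∀ q ∈ P, p ≤ q → s p ≤ s q)
    (g : ℝ → ℝ)
    (hg : ∀ x : ℝ,
      IsLeast {p | p ∈ P ∧ ∀ q ∈ P, Cp p - s p * x ≤ Cp q - s q * x} (g x)) :
    Monotone g := by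
  intro x y hxy
  by_contra h
  push_neg at h
  have hx := hg x
  have hy := hg y
  have hgxP : g x ∈ P := hx.1.1
  have hgyP : g y ∈ P := hy.1.1
  -- strict inequality at x
  have hlt : Cp (g x) - s (g x) * x < Cp (g y) - s (g y) * x := by
    rcases lt_or_eq_of_le (hx.1.2 (g y) hgyP) with h' | h'
    · exact h'
    · exfalso
      have : g y ∈ {p | p ∈ P ∧ ∀ q ∈ P, Cp p - s p * x ≤ Cp q - s q * x} := by
        refine ⟨hgyP, fun q hq => ?_⟩
        rw [← h']
        exact hx.1.2 q hq
      exact absurd (hx.2 this) (not_le.mpr h)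
  have hle : Cp (g y) - s (g y) * y ≤ Cp (g x) - s (g x) * y := hy.1.2 (g x) hgxP
  have hsle : s (g y) ≤ s (g x) := hs (g y) hgyP (g x) hgxP h.le
  nlinarith
end

section
/- For every b ≥ 1 and every d ∈ {1, …, D}, the Bellman value function satisfies J(b, 1) = Cd + J(b−1, D) + δ(b, 1), and J(b, d) = J(b, d−1) + δ(b, d) for every d ∈ {2, …, D}. -/
/-!
Write `A = J(b-1,D)` and `R_d` for the value after a failed transmission (`Cd + A` if `d = 1`,
else `J(b,d-1)`). Since `s·A + (1-s)·R = R - s·(R - A)`, the Bellman minimum equals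
`R_d + Cb(b) + min_p (Cp p - s p·(R_d - A))`. By induction on `d`,
`J(b,d) = A + Cd + Σ_{k ≤ d} δ(b,k)`, i.e. `R_d - A = Cd + Σ_{k < d} δ(b,k)`, so the remaining
minimum is exactly the one defining `δ(b,d)`.
-/

theorem Finset.const_add_inf' {α ι : Type*} [LinearOrder α] [Add α] [AddLeftMono α]
    {t : Finset ι} (ht : t.Nonempty) (c : α) (f : ι → α) :
    c + t.inf' ht f = t.inf' ht (fun i => c + f i) :=
  Finset.apply_inf'_eq_inf'_comp ht (c + ·) fun x y => (min_add_add_left c x y).symm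

theorem Finset.inf'_bellman_eq {α ι : Type*} [CommRing α] [LinearOrder α] [IsOrderedRing α]
    {t : Finset ι} (ht : t.Nonempty) (Cp s : ι → α) (c A R : α) :
    t.inf' ht (fun p => c + Cp p + s p * A + (1 - s p) * R) =
      R + (c + t.inf' ht (fun p => Cp p - s p * (R - A))) := by
  rw [Finset.const_add_inf', Finset.const_add_inf']
  exact Finset.inf'_congr ht rfl fun p _ => by ring

section Bellman

def failureValue (Cd : ℝ) (D : ℕ) (J : ℕ → ℕ → ℝ) (b d : ℕ) : ℝ :=
  if d = 1 then Cd + J (b-1) D else J b (d-1)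

theorem failureValue_one (Cd : ℝ) (D : ℕ) (J : ℕ → ℕ → ℝ) (b : ℕ) :
    failureValue Cd D J b 1 = Cd + J (b-1) D :=
  if_pos rfl

theorem failureValue_of_ne_one (Cd : ℝ) (D : ℕ) (J : ℕ → ℕ → ℝ) (b : ℕ) {d : ℕ} (hd : d ≠ 1) :
    failureValue Cd D J b d = J b (d-1) :=
  if_neg hd

def SatisfiesDeltaRecursion (P : Finset ℝ) (hP : P.Nonempty) (Cp : ℝ → ℝ) (Cb : ℕ → ℝ)
    (Cd : ℝ) (s : ℝ → ℝ) (δ : ℕ → ℕ → ℝ) : Prop :=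
  ∀ b d, 1 ≤ d → δ b d =
    Cb b + P.inf' hP (fun p => Cp p - s p * (Cd + ∑ k ∈ Finset.Icc 1 (d-1), δ b k))

def SatisfiesBellmanEquation (P : Finset ℝ) (hP : P.Nonempty) (Cp : ℝ → ℝ) (Cb : ℕ → ℝ)
    (Cd : ℝ) (s : ℝ → ℝ) (D : ℕ) (J : ℕ → ℕ → ℝ) : Prop :=
  ∀ b d, 1 ≤ b → 1 ≤ d → d ≤ D → J b d =
    P.inf' hP (fun p => Cb b + Cp p + s p * J (b-1) D + (1 - s p) * failureValue Cd D J b d)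

variable {P : Finset ℝ} {hP : P.Nonempty} {Cp : ℝ → ℝ} {Cb : ℕ → ℝ} {Cd : ℝ}
  {s : ℝ → ℝ} {δ : ℕ → ℕ → ℝ} {D : ℕ} {J : ℕ → ℕ → ℝ}

theorem SatisfiesBellmanEquation.eq_failureValue_add_delta
    (hJ : SatisfiesBellmanEquation P hP Cp Cb Cd s D J)
    (hδ : SatisfiesDeltaRecursion P hP Cp Cb Cd s δ)
    {b d : ℕ} (hb : 1 ≤ b) (hd : 1 ≤ d) (hdD : d ≤ D)
    (hfail : failureValue Cd D J b d - J (b-1) D = Cd + ∑ k ∈ Finset.Icc 1 (d-1), δ b k) :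
    J b d = failureValue Cd D J b d + δ b d := by
  rw [hJ b d hb hd hdD, Finset.inf'_bellman_eq, hfail, hδ b d hd]

theorem SatisfiesBellmanEquation.eq_one
    (hJ : SatisfiesBellmanEquation P hP Cp Cb Cd s D J)
    (hδ : SatisfiesDeltaRecursion P hP Cp Cb Cd s δ)
    {b : ℕ} (hb : 1 ≤ b) (hD : 1 ≤ D) :
    J b 1 = Cd + J (b-1) D + δ b 1 := by
  rw [hJ.eq_failureValue_add_delta hδ hb le_rfl hD (by simp [failureValue_one]),
    failureValue_one]

theorem SatisfiesBellmanEquation.eq_add_sum_delta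
    (hJ : SatisfiesBellmanEquation P hP Cp Cb Cd s D J)
    (hδ : SatisfiesDeltaRecursion P hP Cp Cb Cd s δ)
    {b : ℕ} (hb : 1 ≤ b) {d : ℕ} (hd : 1 ≤ d) (hdD : d ≤ D) :
    J b d = J (b-1) D + (Cd + ∑ k ∈ Finset.Icc 1 d, δ b k) := by
  induction d, hd using Nat.le_induction with
  | base =>
    rw [hJ.eq_one hδ hb hdD, Finset.Icc_self, Finset.sum_singleton]
    ring
  | succ d hd ih =>
    have hfail : failureValue Cd D J b (d + 1) = J b d := by
      rw [failureValue_of_ne_one _ _ _ _ (by omega), add_tsub_cancel_right]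
    rw [hJ.eq_failureValue_add_delta hδ hb (by omega) hdD
        (by rw [hfail, ih (by omega), add_tsub_cancel_right]; ring),
      hfail, ih (by omega), Finset.sum_Icc_succ_top (by omega)]
    ring

theorem SatisfiesBellmanEquation.eq_prev_add_delta
    (hJ : SatisfiesBellmanEquation P hP Cp Cb Cd s D J)
    (hδ : SatisfiesDeltaRecursion P hP Cp Cb Cd s δ)
    {b : ℕ} (hb : 1 ≤ b) {d : ℕ} (hd : 2 ≤ d) (hdD : d ≤ D) :
    J b d = J b (d-1) + δ b d := by
  have hfail := failureValue_of_ne_one Cd D J b (by omega : d ≠ 1)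
  rw [hJ.eq_failureValue_add_delta hδ hb (by omega) hdD
      (by rw [hfail, hJ.eq_add_sum_delta hδ hb (by omega) (by omega)]; ring),
    hfail]

end Bellman

theorem bellman_reformulation_general
    (P : Finset ℝ) (hP : P.Nonempty)
    (Cp : ℝ → ℝ)
    (Cb : ℕ → ℝ)
    (Cd : ℝ)
    (s : ℝ → ℝ)
    (δ : ℕ → ℕ → ℝ)
    (hδ : ∀ b d, 1 ≤ d → δ b d =
      Cb b + P.inf' hP (fun p => Cp p - s p * (Cd + ∑ k ∈ Finset.Icc 1 (d-1), δ b k)))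
    (D : ℕ) (hD : 1 ≤ D)
    (J : ℕ → ℕ → ℝ)
    (hJ : ∀ b d, 1 ≤ b → 1 ≤ d → d ≤ D → J b d =
      P.inf' hP (fun p => Cb b + Cp p + s p * J (b-1) D +
        (1 - s p) * (if d = 1 then Cd + J (b-1) D else J b (d-1)))) :
    ∀ b : ℕ, 1 ≤ b →
      J b 1 = Cd + J (b-1) D + δ b 1 ∧
      ∀ d : ℕ, 2 ≤ d → d ≤ D → J b d = J b (d-1) + δ b d := by
  have hJ' : SatisfiesBellmanEquation P hP Cp Cb Cd s D J := hJ
  exact fun b hb => ⟨hJ'.eq_one hδ hb hD, fun d hd hdD => hJ'.eq_prev_add_delta hδ hb hd hdD⟩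

/-- Reformulation of the Bellman equation: for every backlog `b ≥ 1`,
`J(b,1) = Cd + J(b-1,D) + δ(b,1)` and `J(b,d) = J(b,d-1) + δ(b,d)` for
`d ∈ {2,…,D}`. -/
theorem bellman_reformulation
    (P : Finset ℝ) (hP : P.Nonempty) (hPnn : ∀ p ∈ P, (0:ℝ) ≤ p)
    (Cp : ℝ → ℝ) (hCp : Monotone Cp) (hCp0 : ∀ p, 0 ≤ Cp p)
    (Cb : ℕ → ℝ) (hCb : Monotone Cb) (hCb0 : ∀ b, 0 ≤ Cb b)
    (Cd : ℝ) (hCd : 0 ≤ Cd)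
    (s : ℝ → ℝ) (hs : Monotone s) (hs0 : ∀ p, 0 ≤ s p) (hs1 : ∀ p, s p ≤ 1)
    (δ : ℕ → ℕ → ℝ)
    (hδ : ∀ b d, 1 ≤ d → δ b d =
      Cb b + P.inf' hP (fun p => Cp p - s p * (Cd + ∑ k ∈ Finset.Icc 1 (d-1), δ b k)))
    (D : ℕ) (hD : 1 ≤ D)
    (J : ℕ → ℕ → ℝ)
    (hJ0 : ∀ d, J 0 d = 0)
    (hJ : ∀ b d, 1 ≤ b → 1 ≤ d → d ≤ D → J b d =
      P.inf' hP (fun p => Cb b + Cp p + s p * J (b-1) D +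
        (1 - s p) * (if d = 1 then Cd + J (b-1) D else J b (d-1)))) :
    ∀ b : ℕ, 1 ≤ b →
      J b 1 = Cd + J (b-1) D + δ b 1 ∧
      ∀ d : ℕ, 2 ≤ d → d ≤ D → J b d = J b (d-1) + δ b d :=
  bellman_reformulation_general P hP Cp Cb Cd s δ hδ D hD J hJ
end

section
/- For every b ≥ 1 and every d ∈ {1, …, D}, the least element of the set of minimizers over p ∈ 𝒫 of the Bellman expression Cb(b) + Cp(p) + s(p)·J(b−1,D) + (1−s(p))·(if d = 1 then Cd + J(b−1,D) else J(b,d−1)) is equal to μ(b,d), the least element of the set of minimizers over p ∈ 𝒫 of Cp(p) − s(p)·(Cd + σ(b,d−1)). -/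
/-!
Fix the backlog `b` and write `V = J(b-1,D)`. By induction on the deadline, the continuation
value `if d = 1 then Cd + V else J(b,d-1)` equals `V + Cd + σ(b,d-1)`: the Bellman expression with
continuation `V + c` is `Cb(b) + V + c + (Cp p - s p * c)`, and for `c = Cd + σ(b,d-1)` its minimum
over `𝒫` adds exactly `δ(b,d)`. So at every deadline the Bellman objective and the objective
defining `μ(b,d)` differ by a constant and have the same minimizers.
-/

open Finset

theorem setOf_forall_le_eq_of_eq_const_add {ι β : Type*} [AddCommGroup β] [LinearOrder β]
    [IsOrderedAddMonoid β] {P : Finset ι} {F G : ι → β} {c : β} (hFG : ∀ p, F p = c + G p) :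
    {p | p ∈ P ∧ ∀ q ∈ P, F p ≤ F q} = {p | p ∈ P ∧ ∀ q ∈ P, G p ≤ G q} := by
  simp only [hFG, add_le_add_iff_left]

theorem Finset.inf'_const_add {ι α : Type*} [LinearOrder α] [Add α] [AddLeftMono α]
    {P : Finset ι} (hP : P.Nonempty) (c : α) (f : ι → α) :
    P.inf' hP (fun i => c + f i) = c + P.inf' hP f :=
  (apply_inf'_eq_inf'_comp hP (c + ·) fun x y => (min_add_add_left c x y).symm).symm

theorem bellman_cost_eq {Cb Cp s V X c : ℝ} (hX : X = V + c) :
    Cb + Cp + s * V + (1 - s) * X = (Cb + X) + (Cp - s * c) := by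
  rw [hX]
  ring

section StageValue

variable {P : Finset ℝ} (hP : P.Nonempty) {Cp s : ℝ → ℝ} {Cb Cd V : ℝ} {δ σ Jb : ℕ → ℝ}

theorem bellman_value_eq_of_continuation_eq
    (hδ : ∀ d, 1 ≤ d → δ d = Cb + P.inf' hP (fun p => Cp p - s p * (Cd + σ (d - 1))))
    (hσ : ∀ d, σ (d + 1) = σ d + δ (d + 1)) {d : ℕ} (hd : 1 ≤ d) {X : ℝ}
    (hJ : Jb d = P.inf' hP (fun p => Cb + Cp p + s p * V + (1 - s p) * X))
    (hX : X = V + (Cd + σ (d - 1))) :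
    Jb d = V + (Cd + σ d) := by
  obtain ⟨e, rfl⟩ : ∃ e, d = e + 1 := ⟨d - 1, by omega⟩
  rw [hJ, funext fun p => bellman_cost_eq hX, inf'_const_add, hσ, hδ (e + 1) hd, hX,
    Nat.add_sub_cancel]
  ring

theorem bellman_continuation_eq {D : ℕ}
    (hδ : ∀ d, 1 ≤ d → δ d = Cb + P.inf' hP (fun p => Cp p - s p * (Cd + σ (d - 1))))
    (hσ0 : σ 0 = 0) (hσ : ∀ d, σ (d + 1) = σ d + δ (d + 1))
    (hJ : ∀ d, 1 ≤ d → d ≤ D → Jb d = P.inf' hP (fun p => Cb + Cp p + s p * V +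
      (1 - s p) * (if d = 1 then Cd + V else Jb (d - 1)))) :
    ∀ d, 1 ≤ d → d ≤ D → (if d = 1 then Cd + V else Jb (d - 1)) = V + (Cd + σ (d - 1)) := by
  intro d hd hdD
  induction d with
  | zero => omega
  | succ e ih =>
    rcases Nat.eq_zero_or_pos e with rfl | he
    · simp only [if_pos, hσ0]
      ring
    · rw [if_neg (by omega), Nat.add_sub_cancel]
      exact bellman_value_eq_of_continuation_eq hP hδ hσ he (hJ e he (by omega))
        (ih he (by omega))

end StageValue

theorem bellman_argmin_eq_mu_general
    (P : Finset ℝ) (hP : P.Nonempty)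
    (Cp : ℝ → ℝ)
    (Cb : ℕ → ℝ)
    (Cd : ℝ)
    (s : ℝ → ℝ)
    (δ : ℕ → ℕ → ℝ)
    (hδ : ∀ b d, 1 ≤ d → δ b d =
      Cb b + P.inf' hP (fun p => Cp p - s p * (Cd + ∑ k ∈ Finset.Icc 1 (d-1), δ b k)))
    (σ : ℕ → ℕ → ℝ)
    (hσ : ∀ b d, σ b d = ∑ k ∈ Finset.Icc 1 d, δ b k)
    (μ : ℕ → ℕ → ℝ)
    (hμ : ∀ b d, 1 ≤ d → IsLeast
      {p | p ∈ P ∧ ∀ q ∈ P,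
        Cp p - s p * (Cd + σ b (d-1)) ≤ Cp q - s q * (Cd + σ b (d-1))} (μ b d))
    (D : ℕ)
    (J : ℕ → ℕ → ℝ)
    (hJ : ∀ b d, 1 ≤ b → 1 ≤ d → d ≤ D → J b d =
      P.inf' hP (fun p => Cb b + Cp p + s p * J (b-1) D +
        (1 - s p) * (if d = 1 then Cd + J (b-1) D else J b (d-1)))) :
    ∀ b d : ℕ, 1 ≤ b → 1 ≤ d → d ≤ D →
      IsLeast {p | p ∈ P ∧ ∀ q ∈ P,
        Cb b + Cp p + s p * J (b-1) D +
          (1 - s p) * (if d = 1 then Cd + J (b-1) D else J b (d-1)) ≤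
        Cb b + Cp q + s q * J (b-1) D +
          (1 - s q) * (if d = 1 then Cd + J (b-1) D else J b (d-1))} (μ b d) := by
  intro b d hb hd hdD
  have hσ0 : σ b 0 = 0 := by simp [hσ]
  have hσsucc : ∀ e, σ b (e + 1) = σ b e + δ b (e + 1) := fun e => by
    rw [hσ, hσ, sum_Icc_succ_top (by omega)]
  have hδσ : ∀ e, 1 ≤ e → δ b e = Cb b + P.inf' hP (fun p => Cp p - s p * (Cd + σ b (e - 1))) :=
    fun e he => by rw [hδ b e he, hσ]
  have hX := bellman_continuation_eq hP hδσ hσ0 hσsucc (hJ b · hb) d hd hdD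
  rw [setOf_forall_le_eq_of_eq_const_add fun p => bellman_cost_eq hX]
  exact hμ b d hd

/-- The least minimizer of the Bellman expression over `p ∈ 𝒫` coincides with
the policy `μ(b,d)`, the least minimizer of `Cp p - s p * (Cd + σ(b,d-1))`. -/
theorem bellman_argmin_eq_mu
    (P : Finset ℝ) (hP : P.Nonempty) (hPnn : ∀ p ∈ P, (0:ℝ) ≤ p)
    (Cp : ℝ → ℝ) (hCp : Monotone Cp) (hCp0 : ∀ p, 0 ≤ Cp p)
    (Cb : ℕ → ℝ) (hCb : Monotone Cb) (hCb0 : ∀ b, 0 ≤ Cb b)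
    (Cd : ℝ) (hCd : 0 ≤ Cd)
    (s : ℝ → ℝ) (hs : Monotone s) (hs0 : ∀ p, 0 ≤ s p) (hs1 : ∀ p, s p ≤ 1)
    (δ : ℕ → ℕ → ℝ)
    (hδ : ∀ b d, 1 ≤ d → δ b d =
      Cb b + P.inf' hP (fun p => Cp p - s p * (Cd + ∑ k ∈ Finset.Icc 1 (d-1), δ b k)))
    (σ : ℕ → ℕ → ℝ)
    (hσ : ∀ b d, σ b d = ∑ k ∈ Finset.Icc 1 d, δ b k)
    (μ : ℕ → ℕ → ℝ)
    (hμ : ∀ b d, 1 ≤ d → IsLeast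
      {p | p ∈ P ∧ ∀ q ∈ P,
        Cp p - s p * (Cd + σ b (d-1)) ≤ Cp q - s q * (Cd + σ b (d-1))} (μ b d))
    (D : ℕ) (hD : 1 ≤ D)
    (J : ℕ → ℕ → ℝ)
    (hJ0 : ∀ d, J 0 d = 0)
    (hJ : ∀ b d, 1 ≤ b → 1 ≤ d → d ≤ D → J b d =
      P.inf' hP (fun p => Cb b + Cp p + s p * J (b-1) D +
        (1 - s p) * (if d = 1 then Cd + J (b-1) D else J b (d-1)))) :
    ∀ b d : ℕ, 1 ≤ b → 1 ≤ d → d ≤ D →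
      IsLeast {p | p ∈ P ∧ ∀ q ∈ P,
        Cb b + Cp p + s p * J (b-1) D +
          (1 - s p) * (if d = 1 then Cd + J (b-1) D else J b (d-1)) ≤
        Cb b + Cp q + s q * J (b-1) D +
          (1 - s q) * (if d = 1 then Cd + J (b-1) D else J b (d-1))} (μ b d) :=
  bellman_argmin_eq_mu_general P hP Cp Cb Cd s δ hδ σ hσ μ hμ D J hJ
end

section
/- For every fixed d ≥ 0, the map b ↦ σ(b, d) is nondecreasing on {1, 2, 3, …}: if b' ≥ b ≥ 1 then σ(b', d) ≥ σ(b, d). -/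
/-- For every fixed `d ≥ 0`, the map `b ↦ σ(b,d)` is nondecreasing on
`{1,2,3,…}`. -/
theorem sigma_monotone_in_backlog
    (P : Finset ℝ) (hP : P.Nonempty) (hPnn : ∀ p ∈ P, (0:ℝ) ≤ p)
    (Cp : ℝ → ℝ) (hCp : Monotone Cp) (hCp0 : ∀ p, 0 ≤ Cp p)
    (Cb : ℕ → ℝ) (hCb : Monotone Cb) (hCb0 : ∀ b, 0 ≤ Cb b)
    (Cd : ℝ) (hCd : 0 ≤ Cd)
    (s : ℝ → ℝ) (hs : Monotone s) (hs0 : ∀ p, 0 ≤ s p) (hs1 : ∀ p, s p ≤ 1)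
    (δ : ℕ → ℕ → ℝ)
    (hδ : ∀ b d, 1 ≤ d → δ b d =
      Cb b + P.inf' hP (fun p => Cp p - s p * (Cd + ∑ k ∈ Finset.Icc 1 (d-1), δ b k)))
    (σ : ℕ → ℕ → ℝ)
    (hσ : ∀ b d, σ b d = ∑ k ∈ Finset.Icc 1 d, δ b k)
    (T : ℕ → ℝ → ℝ)
    (hT : ∀ b x, T b x = x + Cb b + P.inf' hP (fun p => Cp p - s p * (Cd + x))) :
    ∀ d : ℕ, ∀ b b' : ℕ, 1 ≤ b → b ≤ b' → σ b d ≤ σ b' d := by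
  intro d
  induction d with
  | zero => intro b b' _ _; rw [hσ, hσ]; simp
  | succ d ih =>
    intro b b' hb hbb'
    have hx := ih b b' hb hbb'
    have hsum : ∀ c, σ c (d+1) = σ c d + δ c (d+1) := by
      intro c; rw [hσ, hσ, Finset.sum_Icc_succ_top (by omega)]
    have hδeq : ∀ c, δ c (d+1) = Cb c + P.inf' hP (fun p => Cp p - s p * (Cd + σ c d)) := by
      intro c
      rw [hδ c (d+1) (by omega)]
      congr 1
      rw [show d + 1 - 1 = d from rfl, ← hσ]
    have hmono := hCb hbb'
    rw [hsum b, hsum b', hδeq, hδeq]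
    obtain ⟨p0, hp0, hp0e⟩ := P.exists_mem_eq_inf' hP (fun p => Cp p - s p * (Cd + σ b' d))
    have h1 : P.inf' hP (fun p => Cp p - s p * (Cd + σ b d)) ≤ Cp p0 - s p0 * (Cd + σ b d) :=
      Finset.inf'_le _ hp0
    have key : σ b d + (Cp p0 - s p0 * (Cd + σ b d)) ≤ σ b' d + (Cp p0 - s p0 * (Cd + σ b' d)) := by
      nlinarith [hs1 p0, hs0 p0]
    rw [hp0e]
    linarith
end

section
/- Fix b ≥ 1 and suppose T_b(0) ≤ 0. Then the sequence d ↦ σ(b, d) is nonpositive and nonincreasing: σ(b, d) ≤ 0 and σ(b, d+1) ≤ σ(b, d) for all d ≥ 0. -/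
/-- If `T_b(0) ≤ 0` for a fixed `b ≥ 1`, then `d ↦ σ(b,d)` is nonpositive and
nonincreasing. -/
theorem sigma_nonpos_antitone_of_T_nonpos
    (P : Finset ℝ) (hP : P.Nonempty) (hPnn : ∀ p ∈ P, (0:ℝ) ≤ p)
    (Cp : ℝ → ℝ) (hCp : Monotone Cp) (hCp0 : ∀ p, 0 ≤ Cp p)
    (Cb : ℕ → ℝ) (hCb : Monotone Cb) (hCb0 : ∀ b, 0 ≤ Cb b)
    (Cd : ℝ) (hCd : 0 ≤ Cd)
    (s : ℝ → ℝ) (hs : Monotone s) (hs0 : ∀ p, 0 ≤ s p) (hs1 : ∀ p, s p ≤ 1)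
    (δ : ℕ → ℕ → ℝ)
    (hδ : ∀ b d, 1 ≤ d → δ b d =
      Cb b + P.inf' hP (fun p => Cp p - s p * (Cd + ∑ k ∈ Finset.Icc 1 (d-1), δ b k)))
    (σ : ℕ → ℕ → ℝ)
    (hσ : ∀ b d, σ b d = ∑ k ∈ Finset.Icc 1 d, δ b k)
    (T : ℕ → ℝ → ℝ)
    (hT : ∀ b x, T b x = x + Cb b + P.inf' hP (fun p => Cp p - s p * (Cd + x)))
    (b : ℕ) (hb : 1 ≤ b) (hT0 : T b 0 ≤ 0) :
    ∀ d : ℕ, σ b d ≤ 0 ∧ σ b (d+1) ≤ σ b d := by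
  -- σ b 0 = 0
  have hσ0 : σ b 0 = 0 := by simp [hσ]
  -- recursion: σ b (d+1) = T b (σ b d)
  have hrec : ∀ d : ℕ, σ b (d+1) = T b (σ b d) := by
    intro d
    have h1 : σ b (d+1) = σ b d + δ b (d+1) := by
      rw [hσ, hσ, Finset.sum_Icc_succ_top (by omega : 1 ≤ d+1)]
    rw [h1, hδ b (d+1) (by omega), hT]
    simp only [Nat.add_sub_cancel, ← hσ]
    ring
  -- T b is monotone
  have hmono : ∀ x y : ℝ, x ≤ y → T b x ≤ T b y := by
    intro x y hxy
    obtain ⟨p0, hp0, hp0eq⟩ := P.exists_mem_eq_inf' hP (fun p => Cp p - s p * (Cd + y))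
    rw [hT, hT, hp0eq]
    have h2 : P.inf' hP (fun p => Cp p - s p * (Cd + x)) ≤ Cp p0 - s p0 * (Cd + x) :=
      Finset.inf'_le _ hp0
    have h3 : x + (Cp p0 - s p0 * (Cd + x)) ≤ y + (Cp p0 - s p0 * (Cd + y)) := by
      have := hs1 p0
      nlinarith
    linarith
  -- antitone step by induction
  have hstep : ∀ d : ℕ, σ b (d+1) ≤ σ b d := by
    intro d
    induction d with
    | zero => rw [hrec, hσ0]; exact hT0
    | succ n ih =>
      calc σ b (n+1+1) = T b (σ b (n+1)) := hrec _
        _ ≤ T b (σ b n) := hmono _ _ ih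
        _ = σ b (n+1) := (hrec n).symm
  have hnonpos : ∀ d : ℕ, σ b d ≤ 0 := by
    intro d
    induction d with
    | zero => rw [hσ0]
    | succ n ih => exact le_trans (hstep n) ih
  exact fun d => ⟨hnonpos d, hstep d⟩
end

section
/- For every fixed d ≥ 1, the optimal policy is nondecreasing in the backlog: if b' ≥ b ≥ 1 then μ(b', d) ≥ μ(b, d). -/
/-- For every fixed `d ≥ 1`, the optimal policy `μ(b,d)` is nondecreasing in
the backlog `b`. -/
theorem mu_monotone_in_backlog
    (P : Finset ℝ) (hP : P.Nonempty) (hPnn : ∀ p ∈ P, (0:ℝ) ≤ p)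
    (Cp : ℝ → ℝ) (hCp : Monotone Cp) (hCp0 : ∀ p, 0 ≤ Cp p)
    (Cb : ℕ → ℝ) (hCb : Monotone Cb) (hCb0 : ∀ b, 0 ≤ Cb b)
    (Cd : ℝ) (hCd : 0 ≤ Cd)
    (s : ℝ → ℝ) (hs : Monotone s) (hs0 : ∀ p, 0 ≤ s p) (hs1 : ∀ p, s p ≤ 1)
    (δ : ℕ → ℕ → ℝ)
    (hδ : ∀ b d, 1 ≤ d → δ b d =
      Cb b + P.inf' hP (fun p => Cp p - s p * (Cd + ∑ k ∈ Finset.Icc 1 (d-1), δ b k)))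
    (σ : ℕ → ℕ → ℝ)
    (hσ : ∀ b d, σ b d = ∑ k ∈ Finset.Icc 1 d, δ b k)
    (μ : ℕ → ℕ → ℝ)
    (hμ : ∀ b d, 1 ≤ d → IsLeast
      {p | p ∈ P ∧ ∀ q ∈ P,
        Cp p - s p * (Cd + σ b (d-1)) ≤ Cp q - s q * (Cd + σ b (d-1))} (μ b d)) :
    ∀ d : ℕ, 1 ≤ d → ∀ b b' : ℕ, 1 ≤ b → b ≤ b' → μ b d ≤ μ b' d := by
  intro d hd b b' hb hbb'
  -- key: shifting A upward decreases the inf by at most the shift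
  have key : ∀ (A A' : ℝ), A ≤ A' →
      P.inf' hP (fun p => Cp p - s p * A) - (A' - A) ≤
      P.inf' hP (fun p => Cp p - s p * A') := by
    intro A A' h
    apply Finset.le_inf'
    intro p hp
    have h1 : P.inf' hP (fun q => Cp q - s q * A) ≤ Cp p - s p * A :=
      Finset.inf'_le _ hp
    have h2 : s p * A' - s p * A ≤ A' - A := by nlinarith [hs0 p, hs1 p]
    linarith
  -- σ is nondecreasing in the backlog
  have hσmono : ∀ n : ℕ, σ b n ≤ σ b' n := by
    intro n
    induction n with
    | zero => simp [hσ]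
    | succ n ih =>
      have e1 := hδ b (n+1) (by omega)
      have e2 := hδ b' (n+1) (by omega)
      simp only [Nat.add_sub_cancel, ← hσ] at e1 e2
      have hsum1 : σ b (n+1) = σ b n + δ b (n+1) := by
        rw [hσ, hσ, Finset.sum_Icc_succ_top (by omega)]
      have hsum2 : σ b' (n+1) = σ b' n + δ b' (n+1) := by
        rw [hσ, hσ, Finset.sum_Icc_succ_top (by omega)]
      have hk := key (Cd + σ b n) (Cd + σ b' n) (by linarith)
      have hCbm := hCb hbb'
      linarith
  obtain ⟨⟨hpP, hpmin⟩, hpleast⟩ := hμ b d hd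
  obtain ⟨⟨hp'P, hp'min⟩, hp'least⟩ := hμ b' d hd
  by_contra hcon
  push_neg at hcon
  have hlt : μ b' d < μ b d := hcon
  have hsle : s (μ b' d) ≤ s (μ b d) := hs hlt.le
  have hA : Cd + σ b (d-1) ≤ Cd + σ b' (d-1) := by linarith [hσmono (d-1)]
  have h1 : Cp (μ b' d) - s (μ b' d) * (Cd + σ b' (d-1)) ≤
      Cp (μ b d) - s (μ b d) * (Cd + σ b' (d-1)) := hp'min _ hpP
  have h2 : ¬ (Cp (μ b' d) - s (μ b' d) * (Cd + σ b (d-1)) ≤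
      Cp (μ b d) - s (μ b d) * (Cd + σ b (d-1))) := by
    intro hle
    have hmin' : ∀ q ∈ P, Cp (μ b' d) - s (μ b' d) * (Cd + σ b (d-1)) ≤
        Cp q - s q * (Cd + σ b (d-1)) := fun q hq => le_trans hle (hpmin q hq)
    exact absurd (hpleast ⟨hp'P, hmin'⟩) (not_le.mpr hlt)
  push_neg at h2
  nlinarith [mul_nonneg (sub_nonneg.mpr hsle) (sub_nonneg.mpr hA)]
end

section
/- Fix b ≥ 1 and suppose T_b(0) ≤ 0, where T_b(x) = x + Cb(b) + min_{p ∈ 𝒫}(Cp(p) − s(p)·(Cd + x)). Then the optimal policy is nonincreasing in the residual deadline: if d' ≥ d ≥ 1 then μ(b, d') ≤ μ(b, d). -/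
/-- If `T_b(0) ≤ 0` for a fixed `b ≥ 1`, then the optimal policy `μ(b,d)` is
nonincreasing in the residual deadline `d`. -/
theorem mu_antitone_in_deadline_of_T_nonpos
    (P : Finset ℝ) (hP : P.Nonempty) (hPnn : ∀ p ∈ P, (0:ℝ) ≤ p)
    (Cp : ℝ → ℝ) (hCp : Monotone Cp) (hCp0 : ∀ p, 0 ≤ Cp p)
    (Cb : ℕ → ℝ) (hCb : Monotone Cb) (hCb0 : ∀ b, 0 ≤ Cb b)
    (Cd : ℝ) (hCd : 0 ≤ Cd)
    (s : ℝ → ℝ) (hs : Monotone s) (hs0 : ∀ p, 0 ≤ s p) (hs1 : ∀ p, s p ≤ 1)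
    (δ : ℕ → ℕ → ℝ)
    (hδ : ∀ b d, 1 ≤ d → δ b d =
      Cb b + P.inf' hP (fun p => Cp p - s p * (Cd + ∑ k ∈ Finset.Icc 1 (d-1), δ b k)))
    (σ : ℕ → ℕ → ℝ)
    (hσ : ∀ b d, σ b d = ∑ k ∈ Finset.Icc 1 d, δ b k)
    (μ : ℕ → ℕ → ℝ)
    (hμ : ∀ b d, 1 ≤ d → IsLeast
      {p | p ∈ P ∧ ∀ q ∈ P,
        Cp p - s p * (Cd + σ b (d-1)) ≤ Cp q - s q * (Cd + σ b (d-1))} (μ b d))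
    (T : ℕ → ℝ → ℝ)
    (hT : ∀ b x, T b x = x + Cb b + P.inf' hP (fun p => Cp p - s p * (Cd + x)))
    (b : ℕ) (hb : 1 ≤ b) (hT0 : T b 0 ≤ 0) :
    ∀ d d' : ℕ, 1 ≤ d → d ≤ d' → μ b d' ≤ μ b d := by

  -- T is monotone in x
  have hTmono : ∀ x y : ℝ, x ≤ y → T b x ≤ T b y := by
    intro x y hxy
    rw [hT, hT]
    have h1 : P.inf' hP (fun p => Cp p - s p * (Cd + x))
        ≤ P.inf' hP (fun p => Cp p - s p * (Cd + y)) + (y - x) := by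
      obtain ⟨q, hq, hq2⟩ := P.exists_mem_eq_inf' hP (fun p => Cp p - s p * (Cd + y))
      have := Finset.inf'_le (fun p => Cp p - s p * (Cd + x)) hq
      have hsq0 := hs0 q
      have hsq1 := hs1 q
      rw [hq2]
      nlinarith
    linarith
  have hσ0 : σ b 0 = 0 := by simp [hσ]
  have hσT : ∀ n : ℕ, σ b (n + 1) = T b (σ b n) := by
    intro n
    have hδn := hδ b (n + 1) (by omega)
    simp only [Nat.add_sub_cancel] at hδn
    rw [hσ b (n + 1), Finset.sum_Icc_succ_top (by omega : 1 ≤ n + 1), hδn,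
      hT, hσ b n]
    ring
  have hσsucc : ∀ n : ℕ, σ b (n + 1) ≤ σ b n := by
    intro n
    induction n with
    | zero =>
      rw [hσT, hσ0]
      exact hT0
    | succ m ih =>
      calc σ b (m + 1 + 1) = T b (σ b (m + 1)) := hσT (m + 1)
        _ ≤ T b (σ b m) := hTmono _ _ ih
        _ = σ b (m + 1) := (hσT m).symm
  have hanti : Antitone (fun n => σ b n) := antitone_nat_of_succ_le hσsucc
  intro d d' hd hdd'
  have hc : σ b (d' - 1) ≤ σ b (d - 1) := hanti (Nat.sub_le_sub_right hdd' 1)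
  obtain ⟨⟨hpP, hpmin⟩, hpleast⟩ := hμ b d hd
  obtain ⟨⟨hp'P, hp'min⟩, hp'least⟩ := hμ b d' (hd.trans hdd')
  by_cases h : μ b d' ≤ μ b d
  · exact h
  · have hle : μ b d ≤ μ b d' := le_of_not_ge h
    have hsle : s (μ b d) ≤ s (μ b d') := hs hle
    have key : ∀ q ∈ P, Cp (μ b d) - s (μ b d) * (Cd + σ b (d' - 1))
        ≤ Cp q - s q * (Cd + σ b (d' - 1)) := by
      intro q hq
      have h1 := hpmin (μ b d') hp'P
      have h2 := hp'min q hq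
      nlinarith [mul_nonneg (sub_nonneg.2 hc) (sub_nonneg.2 hsle)]
    exact hp'least ⟨hpP, key⟩
end

section
/- Let m = min_{p ∈ 𝒫}(Cp(p) − s(p)·Cd), M = max_{p ∈ 𝒫}(Cp(p) − s(p)·Cd), s_min = s(min 𝒫), and s_max = s(max 𝒫). Fix b ≥ 1 and suppose T_b(0) > 0, where T_b(x) = x + Cb(b) + min_{p ∈ 𝒫}(Cp(p) − s(p)·(Cd + x)). Then for every d ≥ 1, (Cb(b) + m)·Σ_{k=0}^{d−1}(1 − s_max)^k ≤ σ(b, d) ≤ (Cb(b) + M)·Σ_{k=0}^{d−1}(1 − s_min)^k. -/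
/-- Geometric-sum bounds on `σ(b,d)` when `T_b(0) > 0`:
`(Cb(b)+m)·Σ_{k=0}^{d-1}(1-s_max)^k ≤ σ(b,d) ≤ (Cb(b)+M)·Σ_{k=0}^{d-1}(1-s_min)^k`. -/
theorem sigma_bounds_of_T_pos
    (P : Finset ℝ) (hP : P.Nonempty) (hPnn : ∀ p ∈ P, (0:ℝ) ≤ p)
    (Cp : ℝ → ℝ) (hCp : Monotone Cp) (hCp0 : ∀ p, 0 ≤ Cp p)
    (Cb : ℕ → ℝ) (hCb : Monotone Cb) (hCb0 : ∀ b, 0 ≤ Cb b)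
    (Cd : ℝ) (hCd : 0 ≤ Cd)
    (s : ℝ → ℝ) (hs : Monotone s) (hs0 : ∀ p, 0 ≤ s p) (hs1 : ∀ p, s p ≤ 1)
    (δ : ℕ → ℕ → ℝ)
    (hδ : ∀ b d, 1 ≤ d → δ b d =
      Cb b + P.inf' hP (fun p => Cp p - s p * (Cd + ∑ k ∈ Finset.Icc 1 (d-1), δ b k)))
    (σ : ℕ → ℕ → ℝ)
    (hσ : ∀ b d, σ b d = ∑ k ∈ Finset.Icc 1 d, δ b k)
    (T : ℕ → ℝ → ℝ)
    (hT : ∀ b x, T b x = x + Cb b + P.inf' hP (fun p => Cp p - s p * (Cd + x)))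
    (b : ℕ) (hb : 1 ≤ b) (hT0 : 0 < T b 0) :
    ∀ d : ℕ, 1 ≤ d →
      (Cb b + P.inf' hP (fun p => Cp p - s p * Cd)) *
          ∑ k ∈ Finset.range d, (1 - s (P.max' hP))^k ≤ σ b d ∧
      σ b d ≤ (Cb b + P.sup' hP (fun p => Cp p - s p * Cd)) *
          ∑ k ∈ Finset.range d, (1 - s (P.min' hP))^k := by
  intro d hd
  set m := P.inf' hP (fun p => Cp p - s p * Cd) with hm
  set M := P.sup' hP (fun p => Cp p - s p * Cd) with hM
  set r1 := 1 - s (P.max' hP) with hr1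
  set r2 := 1 - s (P.min' hP) with hr2
  have hr1nn : 0 ≤ r1 := by have := hs1 (P.max' hP); rw [hr1]; linarith
  have hr2nn : 0 ≤ r2 := by have := hs1 (P.min' hP); rw [hr2]; linarith
  have hmpos : 0 < Cb b + m := by
    have h := hT0
    rw [hT] at h
    simpa [hm, add_zero, zero_add] using h
  have hmM : m ≤ M := by
    rw [hm, hM]
    exact le_trans (Finset.inf'_le _ (P.min'_mem hP)) (Finset.le_sup' (fun p => Cp p - s p * Cd) (P.min'_mem hP))
  induction d, hd using Nat.le_induction with
  | base =>
    have hσ1 : σ b 1 = Cb b + m := by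
      rw [hσ, Finset.Icc_self, Finset.sum_singleton, hδ b 1 le_rfl]
      simp [hm]
    constructor
    · simp [hσ1]
    · simp [hσ1]; linarith
  | succ d hd ih =>
    obtain ⟨ihL, ihU⟩ := ih
    have hLnn : 0 ≤ (Cb b + m) * ∑ k ∈ Finset.range d, r1 ^ k :=
      mul_nonneg hmpos.le (Finset.sum_nonneg fun k _ => pow_nonneg hr1nn k)
    have hσnn : 0 ≤ σ b d := le_trans hLnn ihL
    have hstep : σ b (d+1) = σ b d +
        (Cb b + P.inf' hP (fun p => Cp p - s p * (Cd + σ b d))) := by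
      have h1 : σ b (d+1) = σ b d + δ b (d+1) := by
        rw [hσ b (d+1), hσ b d, Finset.sum_Icc_succ_top (by omega : (1:ℕ) ≤ d+1)]
      rw [h1, hδ b (d+1) (by omega), Nat.add_sub_cancel, ← hσ b d]
    have hlow : m - s (P.max' hP) * σ b d ≤
        P.inf' hP (fun p => Cp p - s p * (Cd + σ b d)) := by
      apply Finset.le_inf'
      intro p hp
      have h1 : m ≤ Cp p - s p * Cd := Finset.inf'_le _ hp
      have h2 : s p ≤ s (P.max' hP) := hs (P.le_max' p hp)
      have h3 : s p * σ b d ≤ s (P.max' hP) * σ b d :=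
        mul_le_mul_of_nonneg_right h2 hσnn
      have h4 : s p * (Cd + σ b d) = s p * Cd + s p * σ b d := mul_add _ _ _
      linarith
    have hup : P.inf' hP (fun p => Cp p - s p * (Cd + σ b d)) ≤
        M - s (P.min' hP) * σ b d := by
      refine le_trans (Finset.inf'_le _ (P.min'_mem hP)) ?_
      have h1 : Cp (P.min' hP) - s (P.min' hP) * Cd ≤ M :=
        Finset.le_sup' (fun p => Cp p - s p * Cd) (P.min'_mem hP)
      have h4 : s (P.min' hP) * (Cd + σ b d)
          = s (P.min' hP) * Cd + s (P.min' hP) * σ b d := mul_add _ _ _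
      linarith
    have e1 : r1 * σ b d = σ b d - s (P.max' hP) * σ b d := by rw [hr1]; ring
    have e2 : r2 * σ b d = σ b d - s (P.min' hP) * σ b d := by rw [hr2]; ring
    constructor
    · rw [geom_sum_succ, hstep]
      have h4 : r1 * ((Cb b + m) * ∑ k ∈ Finset.range d, r1 ^ k) ≤ r1 * σ b d :=
        mul_le_mul_of_nonneg_left ihL hr1nn
      have expand : (Cb b + m) * (r1 * ∑ k ∈ Finset.range d, r1 ^ k + 1)
          = r1 * ((Cb b + m) * ∑ k ∈ Finset.range d, r1 ^ k) + (Cb b + m) := by ring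
      linarith
    · rw [geom_sum_succ, hstep]
      have h4 : r2 * σ b d ≤ r2 * ((Cb b + M) * ∑ k ∈ Finset.range d, r2 ^ k) :=
        mul_le_mul_of_nonneg_left ihU hr2nn
      have expand : (Cb b + M) * (r2 * ∑ k ∈ Finset.range d, r2 ^ k + 1)
          = r2 * ((Cb b + M) * ∑ k ∈ Finset.range d, r2 ^ k) + (Cb b + M) := by ring
      linarith
end

section
/- Let m = min_{p ∈ 𝒫}(Cp(p) − s(p)·Cd), M = max_{p ∈ 𝒫}(Cp(p) − s(p)·Cd), s_min = s(min 𝒫), and s_max = s(max 𝒫). Fix b ≥ 1 and suppose T_b(0) < 0, where T_b(x) = x + Cb(b) + min_{p ∈ 𝒫}(Cp(p) − s(p)·(Cd + x)). Then for every d ≥ 1, (Cb(b) + m)·Σ_{k=0}^{d−1}(1 − s_min)^k ≤ σ(b, d) ≤ (Cb(b) + M)·Σ_{k=0}^{d−1}(1 − s_max)^k. -/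
/-- Geometric-sum bounds on `σ(b,d)` when `T_b(0) < 0`:
`(Cb(b)+m)·Σ_{k=0}^{d-1}(1-s_min)^k ≤ σ(b,d) ≤ (Cb(b)+M)·Σ_{k=0}^{d-1}(1-s_max)^k`. -/
theorem sigma_bounds_of_T_neg
    (P : Finset ℝ) (hP : P.Nonempty) (hPnn : ∀ p ∈ P, (0:ℝ) ≤ p)
    (Cp : ℝ → ℝ) (hCp : Monotone Cp) (hCp0 : ∀ p, 0 ≤ Cp p)
    (Cb : ℕ → ℝ) (hCb : Monotone Cb) (hCb0 : ∀ b, 0 ≤ Cb b)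
    (Cd : ℝ) (hCd : 0 ≤ Cd)
    (s : ℝ → ℝ) (hs : Monotone s) (hs0 : ∀ p, 0 ≤ s p) (hs1 : ∀ p, s p ≤ 1)
    (δ : ℕ → ℕ → ℝ)
    (hδ : ∀ b d, 1 ≤ d → δ b d =
      Cb b + P.inf' hP (fun p => Cp p - s p * (Cd + ∑ k ∈ Finset.Icc 1 (d-1), δ b k)))
    (σ : ℕ → ℕ → ℝ)
    (hσ : ∀ b d, σ b d = ∑ k ∈ Finset.Icc 1 d, δ b k)
    (T : ℕ → ℝ → ℝ)
    (hT : ∀ b x, T b x = x + Cb b + P.inf' hP (fun p => Cp p - s p * (Cd + x)))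
    (b : ℕ) (hb : 1 ≤ b) (hT0 : T b 0 < 0) :
    ∀ d : ℕ, 1 ≤ d →
      (Cb b + P.inf' hP (fun p => Cp p - s p * Cd)) *
          ∑ k ∈ Finset.range d, (1 - s (P.min' hP))^k ≤ σ b d ∧
      σ b d ≤ (Cb b + P.sup' hP (fun p => Cp p - s p * Cd)) *
          ∑ k ∈ Finset.range d, (1 - s (P.max' hP))^k := by
  set m := P.inf' hP (fun p => Cp p - s p * Cd) with hm
  set M := P.sup' hP (fun p => Cp p - s p * Cd) with hM
  set sm := s (P.min' hP) with hsm
  set sM := s (P.max' hP) with hsM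
  -- T b 0 < 0 gives Cb b + m < 0
  have hm_neg : Cb b + m < 0 := by
    have h := hT0
    rw [hT b 0] at h
    have : P.inf' hP (fun p => Cp p - s p * (Cd + 0)) = m := by
      simp [hm]
    linarith [this ▸ h]
  have hsm1 : sm ≤ 1 := hs1 _
  have hsM1 : sM ≤ 1 := hs1 _
  -- σ b 0 = 0
  have hσ0 : σ b 0 = 0 := by rw [hσ]; simp
  -- recurrence
  have hσsucc : ∀ n : ℕ, σ b (n+1) =
      σ b n + (Cb b + P.inf' hP (fun p => Cp p - s p * (Cd + σ b n))) := by
    intro n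
    have h1 : σ b (n+1) = σ b n + δ b (n+1) := by
      rw [hσ, hσ, ← Finset.sum_Icc_succ_top (by omega : 1 ≤ n+1)]
    rw [h1, hδ b (n+1) (by omega)]
    simp only [Nat.add_sub_cancel]
    rw [← hσ]
  -- main induction
  have key : ∀ n : ℕ, σ b n ≤ 0 ∧
      (Cb b + m) * ∑ k ∈ Finset.range n, (1 - sm)^k ≤ σ b n ∧
      σ b n ≤ (Cb b + M) * ∑ k ∈ Finset.range n, (1 - sM)^k := by
    intro n
    induction n with
    | zero => simp [hσ0]
    | succ n ih =>
      obtain ⟨hx0, hxL, hxU⟩ := ih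
      set x := σ b n with hx
      -- bounds on the inner inf'
      obtain ⟨p0, hp0, hfp0⟩ := P.exists_mem_eq_inf' hP (fun p => Cp p - s p * Cd)
      have hub0 : P.inf' hP (fun p => Cp p - s p * (Cd + x)) ≤ m - x := by
        have h1 : P.inf' hP (fun p => Cp p - s p * (Cd + x)) ≤
            Cp p0 - s p0 * (Cd + x) := Finset.inf'_le _ hp0
        have h2 : 1 * x ≤ s p0 * x := mul_le_mul_of_nonpos_right (hs1 p0) hx0
        have h3 : m = Cp p0 - s p0 * Cd := hfp0
        nlinarith [h1, h2]
      have hubM : P.inf' hP (fun p => Cp p - s p * (Cd + x)) ≤ M - sM * x := by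
        have hmem := P.max'_mem hP
        have h1 : P.inf' hP (fun p => Cp p - s p * (Cd + x)) ≤
            Cp (P.max' hP) - sM * (Cd + x) := Finset.inf'_le _ hmem
        have h2 : Cp (P.max' hP) - s (P.max' hP) * Cd ≤ M :=
          Finset.le_sup' (fun p => Cp p - s p * Cd) hmem
        rw [← hsM] at h2
        nlinarith [h1, h2]
      have hlb : m - sm * x ≤ P.inf' hP (fun p => Cp p - s p * (Cd + x)) := by
        apply Finset.le_inf'
        intro p hp
        have h1 : m ≤ Cp p - s p * Cd := Finset.inf'_le _ hp
        have h2 : sm ≤ s p := hs (P.min'_le p hp)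
        have h3 : s p * x ≤ sm * x := mul_le_mul_of_nonpos_right h2 hx0
        nlinarith [h1, h3]
      have hrec := hσsucc n
      refine ⟨?_, ?_, ?_⟩
      · -- σ b (n+1) ≤ 0
        linarith [hub0, hrec]
      · -- lower bound
        rw [geom_sum_succ]
        have h4 : (1 - sm) * ((Cb b + m) * ∑ k ∈ Finset.range n, (1 - sm)^k)
            ≤ (1 - sm) * x := by
          apply mul_le_mul_of_nonneg_left hxL (by linarith)
        nlinarith [hlb, hrec, h4]
      · -- upper bound
        rw [geom_sum_succ]
        have h4 : (1 - sM) * x ≤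
            (1 - sM) * ((Cb b + M) * ∑ k ∈ Finset.range n, (1 - sM)^k) := by
          apply mul_le_mul_of_nonneg_left hxU (by linarith)
        nlinarith [hubM, hrec, h4]
  intro d _
  exact ⟨(key d).2.1, (key d).2.2⟩
end
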